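/- Let s be even and t odd. Then ν₂({n}_{s,t}!) = ν₂(n!) + ⌊n/2⌋·ν₂(s/2), where {n}! = {1}{2}⋯{n}. -/

import Mathlib

/-!
Doubling gives `{2m} = {m}⟨m⟩`. Reading the recursions modulo 2 (`s` even, `t` odd) shows
that `{2k+1}` is odd, `⟨2k⟩ = 2·odd` and `⟨2k+1⟩ = s·odd`, so by induction on `m`,
`ν₂({2m}) = ν₂(2m) + ν₂(s/2)`, while `ν₂({2k+1}) = 0 = ν₂(2k+1)`. Summing over `1, …, n`,
each of the `⌊n/2⌋` even indices contributes an extra `ν₂(s/2)` to `ν₂(n!)`.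
-/

/-- Generalized Fibonacci polynomials: {0}=0, {1}=1, {n}=s{n-1}+t{n-2}. -/
def gfib {R : Type*} [CommRing R] (s t : R) : ℕ → R
  | 0 => 0
  | 1 => 1
  | n + 2 => s * gfib s t (n + 1) + t * gfib s t n

/-- Generalized Lucas polynomials: ⟨0⟩=2, ⟨1⟩=s, ⟨n⟩=s⟨n-1⟩+t⟨n-2⟩. -/
def gluc {R : Type*} [CommRing R] (s t : R) : ℕ → R
  | 0 => 2
  | 1 => s
  | n + 2 => s * gluc s t (n + 1) + t * gluc s t n

section Identities

variable {R : Type*} [CommRing R] (s t : R)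

theorem gfib_add_add_one (m n : ℕ) :
    gfib s t (m + n + 1) = gfib s t (m + 1) * gfib s t (n + 1) + t * gfib s t m * gfib s t n := by
  induction m using Nat.twoStepInduction with
  | zero => simp [gfib]
  | one =>
    rw [show 1 + n + 1 = n + 2 by omega]
    simp only [gfib]
    ring
  | more m ih₀ ih₁ =>
    rw [show m + 2 + n + 1 = (m + n + 1) + 2 by omega, gfib,
      show m + n + 1 + 1 = m + 1 + n + 1 by omega, ih₀, ih₁]
    simp only [gfib]
    ring

theorem gluc_add_one (n : ℕ) : gluc s t (n + 1) = gfib s t (n + 2) + t * gfib s t n := by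
  induction n using Nat.twoStepInduction with
  | zero => simp [gluc, gfib]
  | one => simp only [gluc, gfib]; ring
  | more n ih₀ ih₁ =>
    rw [gluc, ih₀, ih₁]
    simp only [gfib]
    ring

theorem gfib_two_mul (n : ℕ) : gfib s t (2 * n) = gfib s t n * gluc s t n := by
  cases n with
  | zero => simp [gfib]
  | succ n =>
    rw [show 2 * (n + 1) = n + (n + 1) + 1 by omega, gfib_add_add_one, gluc_add_one]
    ring

end Identities

section Parity

variable {s t : ℤ}

theorem odd_gfib_two_mul_add_one (hs : Even s) (ht : Odd t) (k : ℕ) :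
    Odd (gfib s t (2 * k + 1)) := by
  induction k with
  | zero => simp [gfib]
  | succ k ih =>
    rw [show 2 * (k + 1) + 1 = (2 * k + 1) + 2 by omega, gfib]
    exact (hs.mul_right _).add_odd (ht.mul ih)

theorem even_gluc (hs : Even s) (n : ℕ) : Even (gluc s t n) := by
  induction n using Nat.twoStepInduction with
  | zero => exact even_two
  | one => exact hs
  | more n ih₀ _ => exact (hs.mul_right _).add (ih₀.mul_left t)

theorem exists_odd_gluc_two_mul_eq (hs : Even s) (ht : Odd t) (k : ℕ) :
    ∃ d : ℤ, Odd d ∧ gluc s t (2 * k) = 2 * d := by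
  induction k with
  | zero => exact ⟨1, odd_one, rfl⟩
  | succ k ih =>
    obtain ⟨d, hd, hgd⟩ := ih
    obtain ⟨e, he⟩ := even_gluc (t := t) hs (2 * k + 1)
    obtain ⟨σ, rfl⟩ := hs
    refine ⟨2 * σ * e + t * d, Even.add_odd ⟨σ * e, by ring⟩ (ht.mul hd), ?_⟩
    rw [show 2 * (k + 1) = 2 * k + 2 by omega, gluc, hgd, he]
    ring

theorem exists_odd_gluc_two_mul_add_one_eq (hs : Even s) (ht : Odd t) (k : ℕ) :
    ∃ c : ℤ, Odd c ∧ gluc s t (2 * k + 1) = s * c := by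
  induction k with
  | zero => exact ⟨1, odd_one, (mul_one s).symm⟩
  | succ k ih =>
    obtain ⟨c, hc, hgc⟩ := ih
    obtain ⟨e, he⟩ := even_gluc (t := t) hs (2 * k + 2)
    refine ⟨2 * e + t * c, Even.add_odd ⟨e, by ring⟩ (ht.mul hc), ?_⟩
    rw [show 2 * (k + 1) + 1 = (2 * k + 1) + 2 by omega, gluc, hgc, he]
    ring

end Parity

theorem Int.ne_zero_of_odd {z : ℤ} (hz : Odd z) : z ≠ 0 := by
  rintro rfl
  simp at hz

theorem padicValInt_two_of_odd {z : ℤ} (hz : Odd z) : padicValInt 2 z = 0 :=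
  padicValInt.eq_zero_of_not_dvd (by simpa [← even_iff_two_dvd] using hz)

theorem padicValInt_two_of_even {s : ℤ} (hs : Even s) (hs0 : s ≠ 0) :
    padicValInt 2 s = padicValInt 2 (s / 2) + 1 := by
  have hs2 := Int.two_mul_ediv_two_of_even hs
  rw [← padicValInt_mul_eq_succ _ (by omega), Nat.cast_ofNat, mul_comm, hs2]

theorem padicValNat_two_mul {m : ℕ} (hm : m ≠ 0) :
    padicValNat 2 (2 * m) = padicValNat 2 m + 1 := by
  rw [padicValNat.mul two_ne_zero hm, padicValNat_self, add_comm]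

section Valuation

variable {s t : ℤ} (hs : Even s) (hs0 : s ≠ 0) (ht : Odd t)
include hs hs0 ht

theorem gluc_ne_zero (n : ℕ) : gluc s t n ≠ 0 := by
  rcases n.even_or_odd' with ⟨k, rfl | rfl⟩
  · obtain ⟨d, hd, h⟩ := exists_odd_gluc_two_mul_eq hs ht k
    rw [h]
    exact mul_ne_zero two_ne_zero (Int.ne_zero_of_odd hd)
  · obtain ⟨c, hc, h⟩ := exists_odd_gluc_two_mul_add_one_eq hs ht k
    rw [h]
    exact mul_ne_zero hs0 (Int.ne_zero_of_odd hc)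

theorem gfib_ne_zero {n : ℕ} (hn : n ≠ 0) : gfib s t n ≠ 0 := by
  induction n using Nat.strong_induction_on with
  | _ n ih =>
    rcases n.even_or_odd' with ⟨k, rfl | rfl⟩
    · rw [gfib_two_mul]
      exact mul_ne_zero (ih k (by omega) (by omega)) (gluc_ne_zero hs hs0 ht k)
    · exact Int.ne_zero_of_odd (odd_gfib_two_mul_add_one hs ht k)

theorem padicValInt_gfib_two_mul {m : ℕ} (hm : m ≠ 0) :
    padicValInt 2 (gfib s t (2 * m)) = padicValNat 2 (2 * m) + padicValInt 2 (s / 2) := by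
  induction m using Nat.strong_induction_on with
  | _ m ih =>
    rw [gfib_two_mul, padicValInt.mul (gfib_ne_zero hs hs0 ht hm) (gluc_ne_zero hs hs0 ht m)]
    rcases m.even_or_odd' with ⟨k, rfl | rfl⟩
    · obtain ⟨d, hd, h⟩ := exists_odd_gluc_two_mul_eq hs ht k
      rw [ih k (by omega) (by omega), h, padicValInt.mul two_ne_zero (Int.ne_zero_of_odd hd),
        padicValInt_two_of_odd hd, padicValNat_two_mul (by omega : 2 * k ≠ 0),
        show padicValInt 2 2 = 1 from padicValInt.self one_lt_two]
      ring
    · obtain ⟨c, hc, h⟩ := exists_odd_gluc_two_mul_add_one_eq hs ht k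
      rw [padicValInt_two_of_odd (odd_gfib_two_mul_add_one hs ht k), h,
        padicValInt.mul hs0 (Int.ne_zero_of_odd hc), padicValInt_two_of_odd hc,
        padicValInt_two_of_even hs hs0, padicValNat_two_mul (by omega),
        padicValNat.eq_zero_of_not_dvd (by omega)]
      ring

end Valuation

theorem stmt14 (s t : ℤ) (hs : Even s) (hs0 : s ≠ 0) (ht : Odd t) (n : ℕ) :
    padicValInt 2 (∏ i ∈ Finset.Icc 1 n, gfib s t i) =
      padicValNat 2 (Nat.factorial n) + (n / 2) * padicValInt 2 (s / 2) := by
  induction n with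
  | zero => simp
  | succ n ih =>
    have hprod : ∏ i ∈ Finset.Icc 1 n, gfib s t i ≠ 0 :=
      Finset.prod_ne_zero_iff.mpr fun i hi => gfib_ne_zero hs hs0 ht (by grind)
    rw [Finset.prod_Icc_succ_top (by omega),
      padicValInt.mul hprod (gfib_ne_zero hs hs0 ht (n := n + 1) (by omega)), ih,
      Nat.factorial_succ, padicValNat.mul (by omega) n.factorial_ne_zero]
    rcases n.even_or_odd' with ⟨k, rfl | rfl⟩
    · rw [padicValInt_two_of_odd (odd_gfib_two_mul_add_one hs ht k),
        padicValNat.eq_zero_of_not_dvd (show ¬2 ∣ 2 * k + 1 by omega),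
        show 2 * k / 2 = k by omega, show (2 * k + 1) / 2 = k by omega]
      ring
    · rw [show 2 * k + 1 + 1 = 2 * (k + 1) by ring, padicValInt_gfib_two_mul hs hs0 ht (by omega),
        show (2 * k + 1) / 2 = k by omega, show 2 * (k + 1) / 2 = k + 1 by omega]
      ring
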